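/- arXiv:2406.00132 — 2 statements merged into one kernel-verified Lean document; each statement's English description precedes it below -/
import Mathlib

section
/- There exist a set 𝕊 of matrices (generated from a fixed QuanTA circuit structure: one layer of single-qubit unitaries, one fixed layer of CNOT gates, then one layer of single-qubit unitaries on n ≥ 2 qubits) and matrices M_1, M_2 ∈ 𝕊 such that M_1·M_2 ∉ 𝕊. -/
open Kronecker

/-- The CNOT gate on two qubits: `CNOT |c, t⟩ = |c, c + t⟩`. -/
def CNOT : Matrix (Fin 2 × Fin 2) (Fin 2 × Fin 2) ℂ :=
  fun p q => if p.1 = q.1 ∧ p.2 = q.1 + q.2 then 1 else 0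

/-- The set `𝕊` of matrices generated by a fixed QuanTA circuit structure on
two qubits: a layer of single-qubit unitaries, one CNOT gate, and another
layer of single-qubit unitaries. -/
def quantaCircuitSet : Set (Matrix (Fin 2 × Fin 2) (Fin 2 × Fin 2) ℂ) :=
  { M | ∃ U₁ U₂ V₁ V₂ : Matrix (Fin 2) (Fin 2) ℂ,
      U₁ ∈ Matrix.unitaryGroup (Fin 2) ℂ ∧ U₂ ∈ Matrix.unitaryGroup (Fin 2) ℂ ∧
      V₁ ∈ Matrix.unitaryGroup (Fin 2) ℂ ∧ V₂ ∈ Matrix.unitaryGroup (Fin 2) ℂ ∧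
      M = (U₁ ⊗ₖ U₂) * CNOT * (V₁ ⊗ₖ V₂) }

/-!
Both CNOT factors lie in `𝕊` (with identity single-qubit layers), but `CNOT * CNOT = 1`.
If `1 = (U₁ ⊗ U₂) * CNOT * (V₁ ⊗ V₂)` with unitary factors, then
`CNOT = (U₁ᴴ * V₁ᴴ) ⊗ (U₂ᴴ * V₂ᴴ)` would be a Kronecker product, i.e. have operator
Schmidt rank one. Entries of a Kronecker product satisfy the exchange identity
`M (i,j) (k,l) * M (i',j') (k',l') = M (i,j') (k,l') * M (i',j) (k',l)`, which CNOT violates.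
-/

theorem Unitary.eq_star_mul_star_of_mul_mul_eq_one {R : Type*} [Monoid R] [StarMul R]
    {u v b : R} (hu : u ∈ unitary R) (hv : v ∈ unitary R) (h : u * b * v = 1) :
    b = star u * star v := by
  calc b = star u * (u * b * v) * star v := by
        simp only [mul_assoc, Unitary.mul_star_self_of_mem hv, mul_one,
          ← mul_assoc (star u), Unitary.star_mul_self_of_mem hu, one_mul]
    _ = star u * star v := by rw [h, mul_one]

theorem Matrix.kronecker_apply_mul_kronecker_apply_swap {R l m n p : Type*} [CommSemiring R]
    (A : Matrix l m R) (B : Matrix n p R) (i i' : l) (j j' : n) (k k' : m) (q q' : p) :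
    (A ⊗ₖ B) (i, j) (k, q) * (A ⊗ₖ B) (i', j') (k', q') =
      (A ⊗ₖ B) (i, j') (k, q') * (A ⊗ₖ B) (i', j) (k', q) := by
  simp only [Matrix.kroneckerMap_apply]
  ring

theorem CNOT_ne_kronecker (P Q : Matrix (Fin 2) (Fin 2) ℂ) : CNOT ≠ P ⊗ₖ Q := by
  intro h
  -- CNOT has entries `1` at `(00, 00)`, `(10, 11)` and `0` at `(00, 01)`, `(10, 10)`.
  have := P.kronecker_apply_mul_kronecker_apply_swap Q 0 1 0 0 0 1 0 1
  rw [← h] at this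
  simp [CNOT] at this

theorem CNOT_mul_self : CNOT * CNOT = 1 := by
  ext ⟨i, j⟩ ⟨k, l⟩
  fin_cases i <;> fin_cases j <;> fin_cases k <;> fin_cases l <;>
    simp [CNOT, Matrix.mul_apply, Fintype.sum_prod_type, Fin.sum_univ_two]

theorem CNOT_mem_quantaCircuitSet : CNOT ∈ quantaCircuitSet :=
  ⟨1, 1, 1, 1, one_mem _, one_mem _, one_mem _, one_mem _, by simp⟩

theorem one_notMem_quantaCircuitSet :
    (1 : Matrix (Fin 2 × Fin 2) (Fin 2 × Fin 2) ℂ) ∉ quantaCircuitSet := by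
  rintro ⟨U₁, U₂, V₁, V₂, hU₁, hU₂, hV₁, hV₂, h⟩
  have hCNOT := Unitary.eq_star_mul_star_of_mul_mul_eq_one
    (Matrix.kronecker_mem_unitary hU₁ hU₂) (Matrix.kronecker_mem_unitary hV₁ hV₂) h.symm
  simp only [Matrix.star_eq_conjTranspose, Matrix.conjTranspose_kronecker,
    ← Matrix.mul_kronecker_mul] at hCNOT
  exact CNOT_ne_kronecker _ _ hCNOT

/-- Composition openness: the set of matrices generated from the fixed QuanTA
circuit structure is not closed under matrix multiplication. -/
theorem quanta_composition_openness :
    ∃ M₁ M₂ : Matrix (Fin 2 × Fin 2) (Fin 2 × Fin 2) ℂ,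
      M₁ ∈ quantaCircuitSet ∧ M₂ ∈ quantaCircuitSet ∧ M₁ * M₂ ∉ quantaCircuitSet :=
  ⟨CNOT, CNOT, CNOT_mem_quantaCircuitSet, CNOT_mem_quantaCircuitSet,
    CNOT_mul_self ▸ one_notMem_quantaCircuitSet⟩
end

section
/- Let V₁ ∈ ℝ^{d×i} and V₂ ∈ ℝ^{d×j} have orthonormal columns with i ≤ j. Then ‖V₁ᵀV₂‖_F² / min(i,j) = 1 if and only if the column space of V₁ is contained in the column space of V₂. -/
open Matrix

private lemma aux_le {d j : ℕ} (V₂ : Matrix (Fin d) (Fin j) ℝ)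
    (h₂ : V₂ᵀ * V₂ = 1) (x : Fin d → ℝ) :
    (V₂ᵀ *ᵥ x) ⬝ᵥ (V₂ᵀ *ᵥ x) ≤ x ⬝ᵥ x ∧
      ((V₂ᵀ *ᵥ x) ⬝ᵥ (V₂ᵀ *ᵥ x) = x ⬝ᵥ x ↔
        x ∈ LinearMap.range V₂.mulVecLin) := by
  set y : Fin j → ℝ := V₂ᵀ *ᵥ x with hy
  set z : Fin d → ℝ := V₂ *ᵥ y with hz
  have hVz : V₂ᵀ *ᵥ z = y := by
    rw [hz, mulVec_mulVec, h₂, one_mulVec]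
  have hxz : x ⬝ᵥ z = y ⬝ᵥ y := by
    rw [hz, dotProduct_mulVec, ← mulVec_transpose, ← hy]
  have hzz : z ⬝ᵥ z = y ⬝ᵥ y := by
    conv_lhs => rw [hz, dotProduct_mulVec, ← mulVec_transpose, hVz]
  have hkey : (x - z) ⬝ᵥ (x - z) = x ⬝ᵥ x - y ⬝ᵥ y := by
    rw [sub_dotProduct, dotProduct_sub, dotProduct_sub, hxz, hzz,
      dotProduct_comm z x, hxz]
    ring
  have hnn : 0 ≤ (x - z) ⬝ᵥ (x - z) := by
    apply Finset.sum_nonneg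
    intro k _
    exact mul_self_nonneg _
  constructor
  · linarith [hkey, hnn]
  constructor
  · intro he
    have : (x - z) ⬝ᵥ (x - z) = 0 := by rw [hkey, he]; ring
    have hxz0 : x - z = 0 := dotProduct_self_eq_zero.mp this
    have hx : x = z := sub_eq_zero.mp hxz0
    exact ⟨y, by simp [mulVecLin_apply, ← hz, hx]⟩
  · rintro ⟨u, hu⟩
    have hxu : x = V₂ *ᵥ u := by rw [← hu]; rfl
    have hzx : z = x := by
      rw [hz, hy, hxu, mulVec_mulVec, mulVec_mulVec, Matrix.mul_assoc, h₂,
        Matrix.mul_one]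
    have : (x - z) ⬝ᵥ (x - z) = 0 := by simp [hzx]
    linarith [hkey, this]

/-- Saturation of the subspace similarity: for `V₁`, `V₂` with orthonormal
columns and `i ≤ j`, `‖V₁ᵀ V₂‖_F² / min i j = 1` if and only if the column
space of `V₁` is contained in the column space of `V₂`. -/
theorem subspace_similarity_eq_one_iff {d i j : ℕ} (hi : 0 < i) (hij : i ≤ j)
    (V₁ : Matrix (Fin d) (Fin i) ℝ) (V₂ : Matrix (Fin d) (Fin j) ℝ)
    (h₁ : V₁ᵀ * V₁ = 1) (h₂ : V₂ᵀ * V₂ = 1) :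
    (∑ a, ∑ b, ((V₁ᵀ * V₂) a b) ^ 2) / (min i j : ℝ) = 1 ↔
      LinearMap.range V₁.mulVecLin ≤ LinearMap.range V₂.mulVecLin := by
  have hmin : (min i j : ℝ) = (i : ℝ) :=
    min_eq_left (by exact_mod_cast hij)
  have hipos : (0 : ℝ) < i := by exact_mod_cast hi
  -- columns of V₁
  set col : Fin i → Fin d → ℝ := fun a k => V₁ k a with hcol
  have hcol_norm : ∀ a, col a ⬝ᵥ col a = 1 := by
    intro a
    have := congrFun (congrFun h₁ a) a
    simpa [Matrix.mul_apply, dotProduct, col, Matrix.one_apply] using this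
  have hrow : ∀ a, (fun b => (V₁ᵀ * V₂) a b) = V₂ᵀ *ᵥ col a := by
    intro a
    funext b
    simp [Matrix.mul_apply, mulVec, dotProduct, col, mul_comm]
  have hterm : ∀ a, (∑ b, ((V₁ᵀ * V₂) a b) ^ 2) =
      (V₂ᵀ *ᵥ col a) ⬝ᵥ (V₂ᵀ *ᵥ col a) := by
    intro a
    rw [← hrow a]
    simp [dotProduct, sq]
  have hle : ∀ a, (∑ b, ((V₁ᵀ * V₂) a b) ^ 2) ≤ 1 := by
    intro a
    rw [hterm a]
    have := (aux_le V₂ h₂ (col a)).1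
    rwa [hcol_norm a] at this
  have heq_iff : ∀ a, (∑ b, ((V₁ᵀ * V₂) a b) ^ 2) = 1 ↔
      col a ∈ LinearMap.range V₂.mulVecLin := by
    intro a
    rw [hterm a, ← hcol_norm a]
    exact (aux_le V₂ h₂ (col a)).2
  rw [hmin, div_eq_one_iff_eq (ne_of_gt hipos)]
  have hsum_iff : (∑ a, ∑ b, ((V₁ᵀ * V₂) a b) ^ 2) = (i : ℝ) ↔
      ∀ a, (∑ b, ((V₁ᵀ * V₂) a b) ^ 2) = 1 := by
    have h1 : (i : ℝ) = ∑ _a : Fin i, (1 : ℝ) := by simp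
    rw [h1]
    constructor
    · intro h a
      exact (Finset.sum_eq_sum_iff_of_le (fun a _ => hle a)).mp h a
        (Finset.mem_univ a)
    · intro h
      exact Finset.sum_congr rfl fun a _ => h a
  rw [hsum_iff]
  constructor
  · intro h x hx
    obtain ⟨c, hc⟩ := hx
    have hx' : x = ∑ a, c a • col a := by
      rw [← hc]
      funext k
      simp [mulVecLin_apply, mulVec, dotProduct, col, Finset.sum_apply,
        mul_comm]
    rw [hx']
    exact Submodule.sum_mem _ fun a _ =>
      Submodule.smul_mem _ _ ((heq_iff a).mp (h a))
  · intro h a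
    apply (heq_iff a).mpr
    apply h
    refine ⟨Pi.single a 1, ?_⟩
    funext k
    simp [mulVecLin_apply, mulVec_single, col]
end
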